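/- The moments of the Gaussian-based kernel g_{2r}(x) = Σ_{s=0}^{r-1} ((-1)^s/(2^s s!)) φ^{(2s)}(x) satisfy: ∫ g_{2r} = 1, ∫ x^j g_{2r}(x) dx = 0 for 1 ≤ j ≤ 2r - 1, and ∫ x^{2r} g_{2r}(x) dx = (-1)^{r-1} OF(2r). -/

import Mathlib

/-!
Integrating by parts `n` times gives `∫ x^j φ^(n) = (-1)^n j(j-1)⋯(j-n+1) ∫ x^(j-n) φ`; the
falling factorial vanishes for `j < n`, so this covers that case as well. The Gaussian moments are
`∫ x^(2t) φ = (2t-1)!!`, and `0` in odd degree. Hence the odd moments of `g_{2r}` vanish, and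
since `(2t)(2t-1)⋯(2t-2s+1) · (2t-2s-1)!! = 2^s s! C(t,s) (2t-1)!!`, the `2t`-th moment is
`(2t-1)!! Σ_{s<r} (-1)^s C(t,s) = (2t-1)!! (-1)^(r-1) C(t-1,r-1)`: this is `0` for `1 ≤ t < r` and
`(-1)^(r-1) (2r-1)!!` for `t = r`.
-/

open Real MeasureTheory Finset

noncomputable def stdNormalPDF (x : ℝ) : ℝ := (Real.sqrt (2 * Real.pi))⁻¹ * Real.exp (-x ^ 2 / 2)

def oddFactorial (r : ℕ) : ℝ := ∏ i ∈ Finset.range r, (2 * (i : ℝ) + 1)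

noncomputable def gkernel (r : ℕ) (x : ℝ) : ℝ :=
  ∑ s ∈ Finset.range r,
    ((-1 : ℝ) ^ s / (2 ^ s * Nat.factorial s)) * iteratedDeriv (2 * s) stdNormalPDF x

open Polynomial
open scoped ContDiff

theorem ContDiff.hasDerivAt_iteratedDeriv {𝕜 F : Type*} [NontriviallyNormedField 𝕜]
    [NormedAddCommGroup F] [NormedSpace 𝕜 F] {f : 𝕜 → F} (hf : ContDiff 𝕜 ∞ f) (n : ℕ) (x : 𝕜) :
    HasDerivAt (iteratedDeriv n f) (iteratedDeriv (n + 1) f x) x := by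
  rw [iteratedDeriv_succ]
  exact (hf.differentiable_iteratedDeriv n (by exact_mod_cast WithTop.coe_lt_top _) x).hasDerivAt

section MomentsOfDerivatives

variable {f : ℝ → ℝ} (hf : ContDiff ℝ ∞ f)
  (hmom : ∀ j n : ℕ, Integrable fun x : ℝ => x ^ j * iteratedDeriv n f x)
include hf hmom

theorem integral_iteratedDeriv_succ (n : ℕ) : ∫ x, iteratedDeriv (n + 1) f x = 0 :=
  integral_eq_zero_of_hasDerivAt_of_integrable (hf.hasDerivAt_iteratedDeriv n)
    (by simpa using hmom 0 (n + 1)) (by simpa using hmom 0 n)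

theorem integral_pow_succ_mul_iteratedDeriv_succ (j n : ℕ) :
    ∫ x, x ^ (j + 1) * iteratedDeriv (n + 1) f x =
      -((j + 1) * ∫ x, x ^ j * iteratedDeriv n f x) := by
  have hpow (x : ℝ) : HasDerivAt (fun y : ℝ => y ^ (j + 1)) ((j + 1) * x ^ j) x := by
    simpa using hasDerivAt_pow (j + 1) x
  rw [integral_mul_deriv_eq_deriv_mul_of_integrable (fun x _ => hpow x)
    (fun x _ => hf.hasDerivAt_iteratedDeriv n x) (hmom (j + 1) (n + 1))
    (by simpa [Pi.mul_def, mul_assoc] using (hmom j n).const_mul ((j : ℝ) + 1))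
    (hmom (j + 1) n), ← integral_const_mul]
  simp only [mul_assoc]

theorem integral_pow_mul_iteratedDeriv (j n : ℕ) :
    ∫ x, x ^ j * iteratedDeriv n f x =
      (-1) ^ n * j.descFactorial n * ∫ x, x ^ (j - n) * f x := by
  induction n generalizing j with
  | zero => simp
  | succ n ih =>
    cases j with
    | zero => simpa using integral_iteratedDeriv_succ hf hmom n
    | succ j =>
      rw [integral_pow_succ_mul_iteratedDeriv_succ hf hmom, ih, Nat.succ_descFactorial_succ,
        Nat.add_sub_add_right]
      push_cast
      ring

end MomentsOfDerivatives

theorem integrable_eval_mul_exp_neg_mul_sq (P : ℝ[X]) {b : ℝ} (hb : 0 < b) :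
    Integrable fun x : ℝ => P.eval x * exp (-b * x ^ 2) := by
  induction P using Polynomial.induction_on' with
  | add P Q hP hQ =>
    simp only [eval_add, add_mul]
    exact hP.add hQ
  | monomial n a =>
    have hn : (-1 : ℝ) < n := by linarith [n.cast_nonneg (α := ℝ)]
    simpa [mul_assoc] using (integrable_rpow_mul_exp_neg_mul_sq hb hn).const_mul a

theorem stdNormalPDF_eq_gaussianPDFReal : stdNormalPDF = ProbabilityTheory.gaussianPDFReal 0 1 := by
  ext x
  simp [stdNormalPDF, ProbabilityTheory.gaussianPDFReal]

theorem contDiff_stdNormalPDF : ContDiff ℝ ∞ stdNormalPDF := by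
  unfold stdNormalPDF
  fun_prop

theorem iteratedDeriv_stdNormalPDF (n : ℕ) (x : ℝ) :
    iteratedDeriv n stdNormalPDF x =
      (-1) ^ n * aeval x (hermite n) * stdNormalPDF x := by
  have hpdf : stdNormalPDF = fun y => (√(2 * π))⁻¹ * rexp (-(y ^ 2 / 2)) := by
    ext y
    simp [stdNormalPDF, neg_div]
  rw [hpdf, iteratedDeriv_const_mul_field, iteratedDeriv_eq_iterate,
    deriv_gaussian_eq_hermite_mul_gaussian]
  ring

theorem integrable_pow_mul_iteratedDeriv_stdNormalPDF (j n : ℕ) :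
    Integrable fun x : ℝ => x ^ j * iteratedDeriv n stdNormalPDF x := by
  have := integrable_eval_mul_exp_neg_mul_sq
    (C ((-1) ^ n * (√(2 * π))⁻¹) * X ^ j * (hermite n).map (Int.castRingHom ℝ))
    (b := 1 / 2) (by norm_num)
  refine this.congr (ae_of_all _ fun x => ?_)
  simp only [iteratedDeriv_stdNormalPDF, stdNormalPDF, aeval_def, algebraMap_int_eq, eval_mul,
    eval_pow, eval_C, eval_X, eval_map]
  ring_nf

theorem integral_pow_mul_iteratedDeriv_stdNormalPDF (j n : ℕ) :
    ∫ x, x ^ j * iteratedDeriv n stdNormalPDF x =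
      (-1) ^ n * j.descFactorial n * ∫ x, x ^ (j - n) * stdNormalPDF x :=
  integral_pow_mul_iteratedDeriv contDiff_stdNormalPDF
    integrable_pow_mul_iteratedDeriv_stdNormalPDF j n

theorem integral_stdNormalPDF : ∫ x, stdNormalPDF x = 1 := by
  rw [stdNormalPDF_eq_gaussianPDFReal]
  exact ProbabilityTheory.integral_gaussianPDFReal_eq_one 0 one_ne_zero

theorem integral_pow_succ_mul_stdNormalPDF (k : ℕ) :
    ∫ x, x ^ (k + 1) * stdNormalPDF x = k * ∫ x, x ^ (k - 1) * stdNormalPDF x := by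
  have hpow_succ (x : ℝ) : x ^ (k + 1) * stdNormalPDF x =
      -(x ^ k * iteratedDeriv 1 stdNormalPDF x) := by
    rw [iteratedDeriv_stdNormalPDF, hermite_one]
    simp only [aeval_X]
    ring
  simp only [hpow_succ, integral_neg, integral_pow_mul_iteratedDeriv_stdNormalPDF,
    Nat.descFactorial_one]
  ring

theorem integral_pow_two_mul_add_one_mul_stdNormalPDF (t : ℕ) :
    ∫ x, x ^ (2 * t + 1) * stdNormalPDF x = 0 := by
  induction t with
  | zero => simpa using integral_pow_succ_mul_stdNormalPDF 0
  | succ t ih =>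
    rw [integral_pow_succ_mul_stdNormalPDF, show 2 * (t + 1) - 1 = 2 * t + 1 by omega, ih,
      mul_zero]

theorem integral_pow_two_mul_mul_stdNormalPDF (t : ℕ) :
    ∫ x, x ^ (2 * t) * stdNormalPDF x = oddFactorial t := by
  induction t with
  | zero => simp [oddFactorial, integral_stdNormalPDF]
  | succ t ih =>
    rw [show 2 * (t + 1) = 2 * t + 1 + 1 by omega, integral_pow_succ_mul_stdNormalPDF,
      Nat.add_sub_cancel, ih]
    simp only [oddFactorial, prod_range_succ]
    push_cast
    ring

theorem two_pow_mul_factorial_mul_oddFactorial (m : ℕ) :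
    2 ^ m * (m.factorial : ℝ) * oddFactorial m = (2 * m).factorial := by
  induction m with
  | zero => simp [oddFactorial]
  | succ m ih =>
    rw [oddFactorial, prod_range_succ, ← oddFactorial, show 2 * (m + 1) = 2 * m + 1 + 1 by omega,
      Nat.factorial_succ, Nat.factorial_succ, Nat.factorial_succ]
    push_cast
    linear_combination (2 * ((m : ℝ) + 1) * (2 * m + 1)) * ih

theorem descFactorial_mul_oddFactorial (k s : ℕ) :
    ((2 * (k + s)).descFactorial (2 * s) : ℝ) * oddFactorial k =
      2 ^ s * s.factorial * (k + s).choose s * oddFactorial (k + s) := by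
  have hk : (2 : ℝ) ^ k * k.factorial ≠ 0 := by positivity
  have hdesc := Nat.factorial_mul_descFactorial (show 2 * s ≤ 2 * (k + s) by omega)
  rw [show 2 * (k + s) - 2 * s = 2 * k by omega] at hdesc
  have hchoose := Nat.add_choose_mul_factorial_mul_factorial k s
  apply mul_left_cancel₀ hk
  calc (2 : ℝ) ^ k * k.factorial * ((2 * (k + s)).descFactorial (2 * s) * oddFactorial k)
      = (2 * k).factorial * (2 * (k + s)).descFactorial (2 * s) := by
        rw [← two_pow_mul_factorial_mul_oddFactorial]
        ring
    _ = (2 * (k + s)).factorial := by exact_mod_cast hdesc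
    _ = 2 ^ (k + s) * (k + s).factorial * oddFactorial (k + s) :=
        (two_pow_mul_factorial_mul_oddFactorial (k + s)).symm
    _ = 2 ^ k * k.factorial * (2 ^ s * s.factorial * (k + s).choose s * oddFactorial (k + s)) := by
        rw [← hchoose]
        push_cast
        ring

theorem sum_range_succ_neg_one_pow_mul_choose (t m : ℕ) :
    ∑ s ∈ range (m + 1), (-1 : ℝ) ^ s * ((t + 1).choose s : ℝ) = (-1) ^ m * t.choose m := by
  exact_mod_cast Int.alternating_sum_range_choose_eq_choose

theorem integral_pow_mul_gkernel (j r : ℕ) :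
    ∫ x, x ^ j * gkernel r x =
      ∑ s ∈ range r, (-1 : ℝ) ^ s / (2 ^ s * s.factorial) *
        ∫ x, x ^ j * iteratedDeriv (2 * s) stdNormalPDF x := by
  simp only [gkernel, mul_sum, mul_left_comm _ ((-1 : ℝ) ^ _ / _)]
  rw [integral_finsetSum _ fun s _ =>
    (integrable_pow_mul_iteratedDeriv_stdNormalPDF j (2 * s)).const_mul _]
  simp only [integral_const_mul]

theorem gkernel_coeff_mul_integral_pow_two_mul (t s : ℕ) :
    (-1 : ℝ) ^ s / (2 ^ s * s.factorial) *
        ∫ x, x ^ (2 * t) * iteratedDeriv (2 * s) stdNormalPDF x =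
      oddFactorial t * ((-1) ^ s * t.choose s) := by
  rw [integral_pow_mul_iteratedDeriv_stdNormalPDF, (even_two_mul s).neg_one_pow, one_mul]
  rcases le_or_gt s t with hst | hts
  · obtain ⟨k, rfl⟩ := Nat.exists_eq_add_of_le' hst
    rw [show 2 * (k + s) - 2 * s = 2 * k by omega, integral_pow_two_mul_mul_stdNormalPDF,
      descFactorial_mul_oddFactorial]
    field_simp
  · rw [Nat.descFactorial_eq_zero_iff_lt.mpr (by omega), Nat.choose_eq_zero_of_lt hts]
    simp

theorem integral_pow_two_mul_mul_gkernel (t r : ℕ) :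
    ∫ x, x ^ (2 * t) * gkernel r x =
      oddFactorial t * ∑ s ∈ range r, (-1 : ℝ) ^ s * t.choose s := by
  rw [integral_pow_mul_gkernel, mul_sum]
  exact sum_congr rfl fun s _ => gkernel_coeff_mul_integral_pow_two_mul t s

theorem integral_pow_two_mul_add_one_mul_gkernel (m r : ℕ) :
    ∫ x, x ^ (2 * m + 1) * gkernel r x = 0 := by
  rw [integral_pow_mul_gkernel]
  refine sum_eq_zero fun s _ => ?_
  rw [integral_pow_mul_iteratedDeriv_stdNormalPDF]
  rcases le_or_gt s m with hsm | hms
  · rw [show 2 * m + 1 - 2 * s = 2 * (m - s) + 1 by omega,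
      integral_pow_two_mul_add_one_mul_stdNormalPDF]
    simp
  · simp [Nat.descFactorial_eq_zero_iff_lt.mpr (show 2 * m + 1 < 2 * s by omega)]

theorem gkernel_moments (r : ℕ) (hr : 1 ≤ r) :
    (∫ x : ℝ, gkernel r x) = 1 ∧
    (∀ j : ℕ, 1 ≤ j → j ≤ 2 * r - 1 → (∫ x : ℝ, x ^ j * gkernel r x) = 0) ∧
    (∫ x : ℝ, x ^ (2 * r) * gkernel r x) = (-1 : ℝ) ^ (r - 1) * oddFactorial r := by
  obtain ⟨r, rfl⟩ := Nat.exists_eq_add_of_le' hr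
  refine ⟨?_, fun j hj1 hj2 => ?_, ?_⟩
  · simpa [oddFactorial, sum_range_succ'] using integral_pow_two_mul_mul_gkernel 0 (r + 1)
  · obtain ⟨t, rfl | rfl⟩ := Nat.even_or_odd' j
    · obtain ⟨t, rfl⟩ := Nat.exists_eq_add_of_le' (show 1 ≤ t by omega)
      rw [integral_pow_two_mul_mul_gkernel, sum_range_succ_neg_one_pow_mul_choose,
        Nat.choose_eq_zero_of_lt (show t < r by omega)]
      simp
    · exact integral_pow_two_mul_add_one_mul_gkernel t (r + 1)
  · rw [integral_pow_two_mul_mul_gkernel, sum_range_succ_neg_one_pow_mul_choose]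
    simp [mul_comm]
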